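/- Let n ≥ 1, t < n, let g be a unitary 2×2 complex matrix, let M = I_{2^(n−1−t)} ⊗ g ⊗ I_{2^t} be the operator applying g to qubit t of an n-qubit state, and let v ∈ ℂ^(2^n). Then for every j < 2^(n−1), |(M·v)(z(j,t))|² + |(M·v)(o(j,t))|² = |v(z(j,t))|² + |v(o(j,t))|²; i.e., applying a single-qubit gate to target qubit t preserves the probability of each pair of amplitudes corresponding to outcomes differing only in qubit t. -/

import Mathlib

/-!
Under the identification `e`, the outcomes `z j t` and `o j t` are the Kronecker indices
`(j / 2^t, 0, j % 2^t)` and `(j / 2^t, 1, j % 2^t)`. On the pair of amplitudes sharing that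
prefix and suffix, `I ⊗ g ⊗ I` acts exactly as `g`, and a matrix with `gᴴ g = 1` preserves
the sum of squared moduli.
-/

open Kronecker

/-- `z j t`: the binary expansion of `j` with digit `0` inserted at position `t`. -/
def z (j t : ℕ) : ℕ := (j / 2 ^ t) * 2 ^ (t + 1) + j % 2 ^ t

/-- `o j t`: the binary expansion of `j` with digit `1` inserted at position `t`. -/
def o (j t : ℕ) : ℕ := z j t + 2 ^ t

namespace Matrix

variable {α : Type*} {k l m n : Type*}

theorem sum_norm_sq_mulVec_of_conjTranspose_mul_self {𝕜 : Type*} [RCLike 𝕜] [Fintype m]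
    [Fintype n] [DecidableEq n] {g : Matrix m n 𝕜} (hg : gᴴ * g = 1) (w : n → 𝕜) :
    ∑ i, ‖(g *ᵥ w) i‖ ^ 2 = ∑ i, ‖w i‖ ^ 2 := by
  have h : star (g *ᵥ w) ⬝ᵥ (g *ᵥ w) = star w ⬝ᵥ w := by
    rw [star_mulVec, ← dotProduct_mulVec, mulVec_mulVec, hg, one_mulVec]
  simp only [dotProduct, Pi.star_apply, RCLike.star_def, RCLike.conj_mul] at h
  exact_mod_cast h

theorem one_kronecker_mulVec_apply [NonAssocSemiring α] [Fintype l] [DecidableEq l] [Fintype n]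
    (A : Matrix m n α) (v : l × n → α) (a : l) (x : m) :
    ((1 : Matrix l l α) ⊗ₖ A *ᵥ v) (a, x) = (A *ᵥ fun y => v (a, y)) x := by
  simp [mulVec, dotProduct, Fintype.sum_prod_type, one_apply, ite_mul]

theorem kronecker_one_mulVec_apply [NonAssocSemiring α] [Fintype l] [DecidableEq l] [Fintype n]
    (A : Matrix m n α) (v : n × l → α) (x : m) (b : l) :
    (A ⊗ₖ (1 : Matrix l l α) *ᵥ v) (x, b) = (A *ᵥ fun y => v (y, b)) x := by
  simp [mulVec, dotProduct, Fintype.sum_prod_type, one_apply, mul_ite]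

theorem reindex_mulVec_apply [NonUnitalNonAssocSemiring α] {p q : Type*} [Fintype m] [Fintype q]
    (e : m ≃ p) (f : m ≃ q) (A : Matrix m m α) (v : q → α) (i : m) :
    (reindex e f A *ᵥ v) (e i) = (A *ᵥ (v ∘ f)) i := by
  simp [reindex_apply, submatrix_mulVec_equiv]

theorem reindex_one_kronecker_kronecker_one_mulVec_apply [NonAssocSemiring α] {N : Type*}
    [Fintype k] [DecidableEq k] [Fintype l] [DecidableEq l] [Fintype m] [Fintype N]
    (e : k × m × l ≃ N) (g : Matrix m m α) (v : N → α) (a : k) (c : m) (b : l) :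
    (reindex e e ((1 : Matrix k k α) ⊗ₖ (g ⊗ₖ (1 : Matrix l l α))) *ᵥ v) (e (a, c, b)) =
      (g *ᵥ fun c' => v (e (a, c', b))) c := by
  rw [reindex_mulVec_apply, one_kronecker_mulVec_apply, kronecker_one_mulVec_apply]
  rfl

end Matrix

theorem div_two_pow_lt_two_pow_sub {j n t : ℕ} (ht : t < n) (hj : j < 2 ^ (n - 1)) :
    j / 2 ^ t < 2 ^ (n - 1 - t) := by
  rw [Nat.div_lt_iff_lt_mul (by positivity), ← pow_add]
  rwa [Nat.sub_add_cancel (by omega)]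

theorem gate_preserves_pair_probability_general (n t : ℕ) (ht : t < n)
    (g : Matrix (Fin 2) (Fin 2) ℂ) (hg : g.conjTranspose * g = 1)
    (e : (Fin (2 ^ (n - 1 - t)) × Fin 2 × Fin (2 ^ t)) ≃ Fin (2 ^ n))
    (he : ∀ p : Fin (2 ^ (n - 1 - t)) × Fin 2 × Fin (2 ^ t),
      ((e p : Fin (2 ^ n)) : ℕ) = (p.1 : ℕ) * 2 ^ (t + 1) + (p.2.1 : ℕ) * 2 ^ t + (p.2.2 : ℕ))
    (M : Matrix (Fin (2 ^ n)) (Fin (2 ^ n)) ℂ)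
    (hM : M = Matrix.reindex e e
      ((1 : Matrix (Fin (2 ^ (n - 1 - t))) (Fin (2 ^ (n - 1 - t))) ℂ) ⊗ₖ
        (g ⊗ₖ (1 : Matrix (Fin (2 ^ t)) (Fin (2 ^ t)) ℂ))))
    (v : Fin (2 ^ n) → ℂ)
    (j : ℕ) (hj : j < 2 ^ (n - 1))
    (iz io : Fin (2 ^ n)) (hiz : (iz : ℕ) = z j t) (hio : (io : ℕ) = o j t) :
    ‖M.mulVec v iz‖ ^ 2 + ‖M.mulVec v io‖ ^ 2
      = ‖v iz‖ ^ 2 + ‖v io‖ ^ 2 := by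
  let a : Fin (2 ^ (n - 1 - t)) := ⟨j / 2 ^ t, div_two_pow_lt_two_pow_sub ht hj⟩
  let b : Fin (2 ^ t) := ⟨j % 2 ^ t, Nat.mod_lt _ (by positivity)⟩
  have hz : e (a, 0, b) = iz := Fin.ext <| by simp [he, hiz, a, b, z]
  have ho : e (a, 1, b) = io := Fin.ext <| by
    simp only [he, hio, o, z, a, b, Fin.coe_ofNat_eq_mod, Nat.mod_succ, one_mul]; ring
  calc ‖M.mulVec v iz‖ ^ 2 + ‖M.mulVec v io‖ ^ 2
      = ∑ c, ‖g.mulVec (fun c' => v (e (a, c', b))) c‖ ^ 2 := by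
        simp only [Fin.sum_univ_two, ← hz, ← ho, hM,
          Matrix.reindex_one_kronecker_kronecker_one_mulVec_apply]
    _ = ∑ c, ‖v (e (a, c, b))‖ ^ 2 := Matrix.sum_norm_sq_mulVec_of_conjTranspose_mul_self hg _
    _ = ‖v iz‖ ^ 2 + ‖v io‖ ^ 2 := by rw [Fin.sum_univ_two, hz, ho]

/-- Applying a unitary single-qubit gate `g` to target qubit `t` (via the
Kronecker product `I ⊗ g ⊗ I`) preserves the probability of each pair of
amplitudes whose outcomes differ only in qubit `t`.  The index identification
`e` sends the Kronecker-product index `(prefix, target bit, suffix)` to the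
outcome `prefix * 2^(t+1) + bit * 2^t + suffix`. -/
theorem gate_preserves_pair_probability (n t : ℕ) (hn : 1 ≤ n) (ht : t < n)
    (g : Matrix (Fin 2) (Fin 2) ℂ) (hg : g.conjTranspose * g = 1)
    (e : (Fin (2 ^ (n - 1 - t)) × Fin 2 × Fin (2 ^ t)) ≃ Fin (2 ^ n))
    (he : ∀ p : Fin (2 ^ (n - 1 - t)) × Fin 2 × Fin (2 ^ t),
      ((e p : Fin (2 ^ n)) : ℕ) = (p.1 : ℕ) * 2 ^ (t + 1) + (p.2.1 : ℕ) * 2 ^ t + (p.2.2 : ℕ))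
    (M : Matrix (Fin (2 ^ n)) (Fin (2 ^ n)) ℂ)
    (hM : M = Matrix.reindex e e
      ((1 : Matrix (Fin (2 ^ (n - 1 - t))) (Fin (2 ^ (n - 1 - t))) ℂ) ⊗ₖ
        (g ⊗ₖ (1 : Matrix (Fin (2 ^ t)) (Fin (2 ^ t)) ℂ))))
    (v : Fin (2 ^ n) → ℂ)
    (j : ℕ) (hj : j < 2 ^ (n - 1))
    (iz io : Fin (2 ^ n)) (hiz : (iz : ℕ) = z j t) (hio : (io : ℕ) = o j t) :
    ‖M.mulVec v iz‖ ^ 2 + ‖M.mulVec v io‖ ^ 2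
      = ‖v iz‖ ^ 2 + ‖v io‖ ^ 2 :=
  gate_preserves_pair_probability_general n t ht g hg e he M hM v j hj iz io hiz hio
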